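/- In the cube sampling scheme, for each fixed i ∈ {1,…,n}, the process v_t^i = E[∂_i f(B) | b_1=w_1,…,b_t=w_t] / E[f(B) | b_1=w_1,…,b_t=w_t], t = 0,1,…,n, is a martingale with respect to the filtration generated by (w_1, …, w_t), where W = (w_1,…,w_n) is sampled with law f dμ as in the sequential scheme. -/

import Mathlib

/-
Let `S₊, S₋` be the `f`-masses and `D₊, D₋` the `∂ᵢf`-masses of the two cylinders obtained by
fixing the next bit `b_{t+1} = ±1` in the cylinder `{b_{≤t} = w_{≤t}}`. That cylinder is their
disjoint union, so `v_t^i = (D₊ + D₋) / (S₊ + S₋)`; pairing each point with its flip in the next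
coordinate gives `v_t^{t+1} = (S₊ - S₋) / (S₊ + S₋)`, i.e. the transition probabilities
`(1 ± v_t) / 2` are `S_± / (S₊ + S₋)`. The martingale identity is then the fact that the mediant
`(D₊ + D₋) / (S₊ + S₋)` is the `S`-weighted average of `D₊ / S₊ = v_{t+1}^i(+)` and
`D₋ / S₋ = v_{t+1}^i(-)`.
-/

open Finset

/-- `cubeDriftI n f i t w = v_t^i`: the ratio
`E[∂_i f(B) | b₁ = w₁,…,b_t = w_t] / E[f(B) | b₁ = w₁,…,b_t = w_t]`. -/
noncomputable def cubeDriftI (n : ℕ) (f : (Fin n → Bool) → ℝ) (i : Fin n) (t : ℕ)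
    (w : Fin n → Bool) : ℝ :=
  (∑ x : Fin n → Bool, if ∀ j : Fin n, (j : ℕ) < t → x j = w j then
      (f (Function.update x i true) - f (Function.update x i false)) / 2 else 0) /
    (∑ x : Fin n → Bool, if ∀ j : Fin n, (j : ℕ) < t → x j = w j then f x else 0)

open Function

theorem Finset.sum_filter_eq_true_add_sum_filter_eq_false {α M : Type*} [AddCommMonoid M]
    (s : Finset α) (p : α → Bool) (g : α → M) :
    ∑ x ∈ s with p x = true, g x + ∑ x ∈ s with p x = false, g x = ∑ x ∈ s, g x := by
  simpa only [Bool.not_eq_true] using sum_filter_add_sum_filter_not s (fun x => p x = true) g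

/-- Updating coordinate `t` to `b` is two-to-one from `s` onto its slice `{x t = b}`. -/
theorem Finset.sum_update_eq_two_nsmul_sum_filter {ι M : Type*} [DecidableEq ι]
    [AddCommMonoid M] {s : Finset (ι → Bool)} {t : ι} (hs : ∀ x c, update x t c ∈ s ↔ x ∈ s)
    (b : Bool) (g : (ι → Bool) → M) :
    ∑ x ∈ s, g (update x t b) = 2 • ∑ x ∈ s with x t = b, g x := by
  rw [← sum_filter_add_sum_filter_not s (fun x => x t = b), two_nsmul]
  congr 1
  · exact sum_congr rfl fun x hx => by rw [← (mem_filter.1 hx).2, update_eq_self]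
  · refine sum_nbij' (update · t b) (update · t !b) ?_ ?_ ?_ ?_ fun _ _ => rfl <;>
      simp +contextual [hs, Bool.eq_not.symm]

/-- The mediant of `a / c` and `b / d` is their average with weights
`(1 ± (c - d) / (c + d)) / 2 = c / (c + d), d / (c + d)`. -/
theorem add_div_add_eq_weighted_avg {K : Type*} [Field K] [CharZero K] {a b c d : K}
    (hc : c ≠ 0) (hd : d ≠ 0) (hcd : c + d ≠ 0) :
    (a + b) / (c + d) =
      (1 + (c - d) / (c + d)) / 2 * (a / c) + (1 - (c - d) / (c + d)) / 2 * (b / d) := by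
  field_simp
  ring

namespace CubeDrift

variable {n : ℕ}

def cylinder (t : ℕ) (w : Fin n → Bool) : Finset (Fin n → Bool) :=
  {x | ∀ j : Fin n, (j : ℕ) < t → x j = w j}

noncomputable def discreteDeriv (f : (Fin n → Bool) → ℝ) (i : Fin n) (x : Fin n → Bool) : ℝ :=
  (f (update x i true) - f (update x i false)) / 2

theorem self_mem_cylinder (t : ℕ) (w : Fin n → Bool) : w ∈ cylinder t w := by
  simp [cylinder]

theorem update_mem_cylinder_iff (t : Fin n) (w x : Fin n → Bool) (c : Bool) :
    update x t c ∈ cylinder t w ↔ x ∈ cylinder t w := by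
  simp only [cylinder, mem_filter, mem_univ, true_and]
  refine forall_congr' fun j => imp_congr_right fun hj => ?_
  rw [update_of_ne (Fin.ne_of_val_ne hj.ne)]

theorem cylinder_succ (t : Fin n) (w : Fin n → Bool) (b : Bool) :
    cylinder (t + 1) (update w t b) = {x ∈ cylinder t w | x t = b} := by
  ext x
  simp only [cylinder, mem_filter, mem_univ, true_and, Nat.lt_succ_iff_lt_or_eq, or_imp,
    forall_and, Fin.val_inj, forall_eq, update_self]
  refine and_congr_left' (forall_congr' fun j => imp_congr_right fun hj => ?_)
  rw [update_of_ne (Fin.ne_of_val_ne hj.ne)]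

theorem cubeDriftI_eq_div (f : (Fin n → Bool) → ℝ) (i : Fin n) (t : ℕ) (w : Fin n → Bool) :
    cubeDriftI n f i t w =
      (∑ x ∈ cylinder t w, discreteDeriv f i x) / ∑ x ∈ cylinder t w, f x := by
  simp only [cubeDriftI, cylinder, discreteDeriv, sum_filter]

theorem sum_cylinder_eq_add (g : (Fin n → Bool) → ℝ) (t : Fin n) (w : Fin n → Bool) :
    ∑ x ∈ cylinder t w, g x =
      ∑ x ∈ cylinder (t + 1) (update w t true), g x +
        ∑ x ∈ cylinder (t + 1) (update w t false), g x := by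
  rw [cylinder_succ, cylinder_succ, sum_filter_eq_true_add_sum_filter_eq_false]

theorem sum_discreteDeriv_cylinder (f : (Fin n → Bool) → ℝ) (t : Fin n) (w : Fin n → Bool) :
    ∑ x ∈ cylinder t w, discreteDeriv f t x =
      ∑ x ∈ cylinder (t + 1) (update w t true), f x -
        ∑ x ∈ cylinder (t + 1) (update w t false), f x := by
  simp only [discreteDeriv, ← sum_div, sum_sub_distrib, cylinder_succ,
    sum_update_eq_two_nsmul_sum_filter (update_mem_cylinder_iff t w), nsmul_eq_mul]
  ring

theorem sum_cylinder_pos {f : (Fin n → Bool) → ℝ} (hpos : ∀ x, 0 < f x) (t : ℕ)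
    (w : Fin n → Bool) : 0 < ∑ x ∈ cylinder t w, f x :=
  sum_pos (fun x _ => hpos x) ⟨w, self_mem_cylinder t w⟩

end CubeDrift

open CubeDrift

theorem cube_drift_martingale_general (n : ℕ) (f : (Fin n → Bool) → ℝ)
    (hpos : ∀ x, 0 < f x)
    (i : Fin n) (t : Fin n) (w : Fin n → Bool) :
    cubeDriftI n f i (t : ℕ) w =
      (1 + cubeDriftI n f t (t : ℕ) w) / 2 *
          cubeDriftI n f i ((t : ℕ) + 1) (Function.update w t true) +
        (1 - cubeDriftI n f t (t : ℕ) w) / 2 *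
          cubeDriftI n f i ((t : ℕ) + 1) (Function.update w t false) := by
  simp only [cubeDriftI_eq_div, sum_discreteDeriv_cylinder]
  rw [sum_cylinder_eq_add (discreteDeriv f i), sum_cylinder_eq_add f]
  have hS (b : Bool) : 0 < ∑ x ∈ cylinder (t + 1) (update w t b), f x := sum_cylinder_pos hpos _ _
  exact add_div_add_eq_weighted_avg (hS true).ne' (hS false).ne' (add_pos (hS true) (hS false)).ne'

/-- In the cube sampling scheme, each process `t ↦ v_t^i` is a martingale: conditionally on
`w₁,…,w_t`, the bit `w_{t+1}` equals `+1` with probability `(1 + v_t)/2` (where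
`v_t = v_t^{t+1}`), and averaging `v_{t+1}^i` over `w_{t+1}` with these weights
recovers `v_t^i`. -/
theorem cube_drift_martingale (n : ℕ) (f : (Fin n → Bool) → ℝ)
    (hpos : ∀ x, 0 < f x)
    (hmean : (∑ x : Fin n → Bool, f x) / 2 ^ n = 1)
    (i : Fin n) (t : Fin n) (w : Fin n → Bool) :
    cubeDriftI n f i (t : ℕ) w =
      (1 + cubeDriftI n f t (t : ℕ) w) / 2 *
          cubeDriftI n f i ((t : ℕ) + 1) (Function.update w t true) +
        (1 - cubeDriftI n f t (t : ℕ) w) / 2 *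
          cubeDriftI n f i ((t : ℕ) + 1) (Function.update w t false) :=
  cube_drift_martingale_general n f hpos i t w
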